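/- arXiv:1304.2132 — 3 statements merged into one kernel-verified Lean document; each statement's English description precedes it below -/
import Mathlib

section
/- Let P_n be the path graph on n ≥ 2 vertices and Δ(s) = s²(D − I) − sA + I its deformed Laplacian. For every real s with |s| > 1, the matrix Δ(s) has a negative eigenvalue, i.e., there exists a vector v with vᵀΔ(s)v < 0 (equivalently, the system ẋ = −Δ(s)x is unstable). -/
open Matrix Filter

/-- The degree matrix of a graph given by its adjacency matrix: the diagonal matrix of
row sums of `A`. -/
noncomputable def degMat {V : Type} [Fintype V] [DecidableEq V] (A : Matrix V V ℝ) :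
    Matrix V V ℝ :=
  Matrix.diagonal fun i => ∑ j, A i j

/-- The deformed Laplacian `Δ(s) = s²(D − I) − sA + I`. -/
noncomputable def defLap {V : Type} [Fintype V] [DecidableEq V] (A : Matrix V V ℝ) (s : ℝ) :
    Matrix V V ℝ :=
  s ^ 2 • (degMat A - 1) - s • A + 1

/-- Adjacency matrix of the path graph `P_n` on vertices `0,…,n−1`:
`i` and `j` are adjacent iff `|i − j| = 1`. -/
noncomputable def pathAdj (n : ℕ) : Matrix (Fin n) (Fin n) ℝ :=
  fun i j => if (i : ℕ) + 1 = (j : ℕ) ∨ (j : ℕ) + 1 = (i : ℕ) then 1 else 0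

/-! On a path with `m + 1` vertices the quadratic form of `Δ(s)` is a sum of squares plus a defect
at the last vertex, `vᵀ Δ(s) v = ∑ₖ (vₖ − s vₖ₊₁)² + (1 − s²) vₘ²`: the squares produce the
off-diagonal terms `−2s vₖ vₖ₊₁` and the diagonal entries `s²(deg − 1) + 1`, except at the last
vertex, where they give `s²` instead of `1`. The geometric vector `vₖ = s^(m−k)` kills every
square, leaving `1 − s² < 0`. -/

theorem defLap_mulVec_apply {V : Type} [Fintype V] [DecidableEq V] (A : Matrix V V ℝ)
    (s : ℝ) (v : V → ℝ) (i : V) :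
    (defLap A s *ᵥ v) i = ∑ j, A i j * (s ^ 2 * v i - s * v j) + (1 - s ^ 2) * v i := by
  have hsum : ∑ j, A i j * (s ^ 2 * v i - s * v j) =
      s ^ 2 * v i * ∑ j, A i j - s * ∑ j, A i j * v j := by
    rw [Finset.mul_sum, Finset.mul_sum, ← Finset.sum_sub_distrib]
    exact Finset.sum_congr rfl fun j _ => by ring
  simp only [defLap, degMat, add_mulVec, sub_mulVec, smul_mulVec, one_mulVec, mulVec_diagonal,
    Pi.add_apply, Pi.sub_apply, Pi.smul_apply, smul_eq_mul]
  rw [hsum, mulVec, dotProduct]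
  ring

theorem sum_pathAdj_mul (m : ℕ) (g : Fin (m + 1) → Fin (m + 1) → ℝ) :
    ∑ i, ∑ j, pathAdj (m + 1) i j * g i j =
      ∑ k : Fin m, (g k.castSucc k.succ + g k.succ k.castSucc) := by
  have hfwd : ∑ i : Fin (m + 1), ∑ j : Fin (m + 1), (if (i : ℕ) + 1 = j then g i j else 0) =
      ∑ k : Fin m, g k.castSucc k.succ := by
    rw [Finset.sum_comm, Fin.sum_univ_succ]
    simp only [Fin.val_zero, Nat.add_one_ne_zero, if_false, Finset.sum_const_zero, zero_add,
      Fin.val_succ, Nat.add_right_cancel_iff]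
    refine Finset.sum_congr rfl fun k _ => ?_
    simp only [← Fin.val_castSucc k, Fin.val_inj, Finset.sum_ite_eq', Finset.mem_univ, if_true]
  have hbwd : ∑ i : Fin (m + 1), ∑ j : Fin (m + 1), (if (j : ℕ) + 1 = i then g i j else 0) =
      ∑ k : Fin m, g k.succ k.castSucc := by
    rw [Fin.sum_univ_succ]
    simp only [Fin.val_zero, Nat.add_one_ne_zero, if_false, Finset.sum_const_zero, zero_add,
      Fin.val_succ, Nat.add_right_cancel_iff]
    refine Finset.sum_congr rfl fun k _ => ?_
    simp only [← Fin.val_castSucc k, Fin.val_inj, Finset.sum_ite_eq', Finset.mem_univ, if_true]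
  rw [Finset.sum_add_distrib, ← hfwd, ← hbwd, ← Finset.sum_add_distrib]
  refine Finset.sum_congr rfl fun i _ => ?_
  rw [← Finset.sum_add_distrib]
  refine Finset.sum_congr rfl fun j _ => ?_
  unfold pathAdj
  split_ifs <;> first | omega | simp

theorem dotProduct_defLap_mulVec {V : Type} [Fintype V] [DecidableEq V] (A : Matrix V V ℝ)
    (s : ℝ) (v : V → ℝ) :
    v ⬝ᵥ (defLap A s *ᵥ v) =
      ∑ i, ∑ j, A i j * (v i * (s ^ 2 * v i - s * v j)) + (1 - s ^ 2) * ∑ i, v i ^ 2 := by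
  simp only [dotProduct, defLap_mulVec_apply, mul_add, Finset.mul_sum, Finset.sum_add_distrib]
  congr 1
  · exact Finset.sum_congr rfl fun i _ => Finset.sum_congr rfl fun j _ => by ring
  · exact Finset.sum_congr rfl fun i _ => by ring

theorem dotProduct_defLap_pathAdj_mulVec (m : ℕ) (s : ℝ) (v : Fin (m + 1) → ℝ) :
    v ⬝ᵥ (defLap (pathAdj (m + 1)) s *ᵥ v) =
      ∑ k : Fin m, (v k.castSucc - s * v k.succ) ^ 2 + (1 - s ^ 2) * v (Fin.last m) ^ 2 := by
  rw [dotProduct_defLap_mulVec, sum_pathAdj_mul, Fin.sum_univ_castSucc (f := fun i => v i ^ 2),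
    mul_add, ← add_assoc, Finset.mul_sum, ← Finset.sum_add_distrib]
  congr 1
  exact Finset.sum_congr rfl fun k _ => by ring

/-- For the path graph `P_n` (`n ≥ 2`) and `|s| > 1`, `Δ(s)` has a negative eigenvalue,
i.e. there is a vector `v` with `vᵀ Δ(s) v < 0`. -/
theorem path_defLap_unstable (n : ℕ) (hn : 2 ≤ n) (s : ℝ) (hs : 1 < |s|) :
    ∃ v : Fin n → ℝ, v ⬝ᵥ (defLap (pathAdj n) s *ᵥ v) < 0 := by
  obtain ⟨m, rfl⟩ : ∃ m, n = m + 1 := ⟨n - 1, by omega⟩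
  refine ⟨fun i => s ^ (m - i), ?_⟩
  have hchain (k : Fin m) : s ^ (m - k.castSucc) - s * s ^ (m - k.succ) = 0 := by
    rw [Fin.val_castSucc, Fin.val_succ, ← pow_succ', Nat.sub_add_eq, Nat.sub_add_cancel (by omega)]
    exact sub_self _
  have hs2 : 1 - s ^ 2 < 0 := sub_neg.mpr (one_lt_sq_iff_one_lt_abs s |>.mpr hs)
  rw [dotProduct_defLap_pathAdj_mulVec]
  simpa only [hchain, Fin.val_last, Nat.sub_self, pow_zero, one_pow, mul_one,
    zero_pow two_ne_zero, Finset.sum_const_zero, zero_add] using hs2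
end

section
/- Let C_n be the cycle graph on n > 2 vertices with n even, and Δ(s) = s²(D − I) − sA + I its deformed Laplacian. For every real s with s ≠ 1 and s ≠ −1, the matrix Δ(s) is positive definite (equivalently, the system ẋ = −Δ(s)x is asymptotically stable). -/
open Matrix Filter

/-- Adjacency matrix of the cycle graph `C_n` on vertices `0,…,n−1` (mod `n`):
`i` and `j` are adjacent iff `i − j ≡ ±1 (mod n)`. -/
noncomputable def cycAdj (n : ℕ) : Matrix (Fin n) (Fin n) ℝ :=
  fun i j => if ((i : ℕ) + 1) % n = (j : ℕ) ∨ ((j : ℕ) + 1) % n = (i : ℕ) then 1 else 0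

/-!
Writing `P` for the permutation matrix of the rotation `i ↦ i + 1`, the adjacency matrix of
`C_n` (`n > 2`) is `P + Pᵀ`, every degree is `2`, and `PᵀP = 1`, so
`Δ(s) = (s² + 1) I − s (P + Pᵀ) = (sI − P)ᵀ (sI − P)`. Hence `Δ(s)` is positive definite as soon as
`sI − P` is injective. A vector in its kernel satisfies `x (i + 1) = s x i`, so going once around
the cycle gives `x = sⁿ x`, and a real `s` with `sⁿ = 1` is `±1`.
-/

lemma eq_zero_of_forall_apply_perm_eq_mul {V : Type*} [Finite V] (σ : Equiv.Perm V) {s : ℝ}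
    (hs1 : s ≠ 1) (hs2 : s ≠ -1) {x : V → ℝ} (hx : ∀ i, x (σ i) = s * x i) : x = 0 := by
  have hpow : ∀ (k : ℕ) i, x ((σ ^ k) i) = s ^ k * x i := by
    intro k
    induction k with
    | zero => simp
    | succ k ih => intro i; rw [pow_succ', Equiv.Perm.mul_apply, hx, ih, pow_succ']; ring
  have hne : s ^ orderOf σ ≠ 1 := by
    have := (orderOf_pos σ).ne'
    rw [Ne, pow_eq_one_iff_cases]
    tauto
  funext i
  have hfix : x i = s ^ orderOf σ * x i := by
    rw [← hpow, pow_orderOf_eq_one, Equiv.Perm.one_apply]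
  have : (s ^ orderOf σ - 1) * x i = 0 := by linarith
  exact (mul_eq_zero.mp this).resolve_left (sub_ne_zero.mpr hne)

section PermMatrix

variable {V : Type} [Fintype V] [DecidableEq V] (σ : Equiv.Perm V)

lemma degMat_permMatrix_add_transpose :
    degMat (σ.permMatrix ℝ + (σ.permMatrix ℝ)ᵀ) = 2 • 1 := by
  ext i j
  simp [degMat, PEquiv.toMatrix_apply, Matrix.diagonal_apply, Matrix.one_apply,
    Finset.sum_add_distrib, one_add_one_eq_two]

lemma defLap_permMatrix_add_transpose (s : ℝ) :
    defLap (σ.permMatrix ℝ + (σ.permMatrix ℝ)ᵀ) s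
      = (s • 1 - σ.permMatrix ℝ)ᴴ * (s • 1 - σ.permMatrix ℝ) := by
  have hPtP : (σ.permMatrix ℝ)ᵀ * σ.permMatrix ℝ = 1 := by
    rw [transpose_permMatrix, ← permMatrix_mul, mul_inv_cancel, permMatrix_one]
  rw [defLap, degMat_permMatrix_add_transpose, conjTranspose_eq_transpose_of_trivial,
    transpose_sub, transpose_smul, transpose_one, sub_mul, mul_sub, mul_sub, hPtP]
  simp only [Matrix.smul_mul, Matrix.mul_smul, Matrix.one_mul, Matrix.mul_one, smul_smul]
  module

lemma injective_mulVec_smul_one_sub_permMatrix {s : ℝ} (hs1 : s ≠ 1) (hs2 : s ≠ -1) :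
    Function.Injective (s • 1 - σ.permMatrix ℝ).mulVec := by
  intro x y hxy
  rw [← sub_eq_zero]
  refine eq_zero_of_forall_apply_perm_eq_mul σ hs1 hs2 fun i => ?_
  have := congrFun (sub_eq_zero.mpr hxy) i
  rw [← mulVec_sub, sub_mulVec, smul_mulVec, one_mulVec, permMatrix_mulVec] at this
  simp only [Pi.sub_apply, Pi.smul_apply, smul_eq_mul, Pi.zero_apply, Function.comp_apply]
    at this ⊢
  linarith

end PermMatrix

lemma val_finRotate {n : ℕ} (i : Fin n) : (finRotate n i : ℕ) = ((i : ℕ) + 1) % n := by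
  obtain _ | n := n
  · exact i.elim0
  · rw [finRotate_apply, Fin.val_add, Fin.val_one', Nat.add_mod_mod]

lemma finRotate_finRotate_ne {n : ℕ} (hn : 2 < n) (i : Fin n) :
    finRotate n (finRotate n i) ≠ i := by
  rw [Ne, Fin.ext_iff, val_finRotate, val_finRotate]
  rcases Nat.lt_or_ge ((i : ℕ) + 1) n with h | h
  · rw [Nat.mod_eq_of_lt h]
    rcases Nat.lt_or_ge ((i : ℕ) + 2) n with h' | h'
    · rw [Nat.mod_eq_of_lt h']; omega
    · rw [show (i : ℕ) + 1 + 1 = n by omega, Nat.mod_self]; omega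
  · rw [show (i : ℕ) + 1 = n by omega, Nat.mod_self, Nat.mod_eq_of_lt (by omega)]; omega

lemma cycAdj_eq_permMatrix_add_transpose {n : ℕ} (hn : 2 < n) :
    cycAdj n = (finRotate n).permMatrix ℝ + ((finRotate n).permMatrix ℝ)ᵀ := by
  ext i j
  have hij : ¬(finRotate n i = j ∧ finRotate n j = i) := fun ⟨h, h'⟩ =>
    finRotate_finRotate_ne hn i (h ▸ h')
  simp only [cycAdj, ← val_finRotate, ← Fin.ext_iff, Matrix.add_apply, Matrix.transpose_apply,
    PEquiv.toMatrix_apply, Equiv.toPEquiv_apply, Option.mem_def, Option.some_inj]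
  split_ifs <;> simp_all

theorem cycle_even_defLap_posDef_general (n : ℕ) (hn : 2 < n) (s : ℝ)
    (hs1 : s ≠ 1) (hs2 : s ≠ -1) : (defLap (cycAdj n) s).PosDef := by
  rw [cycAdj_eq_permMatrix_add_transpose hn, defLap_permMatrix_add_transpose]
  exact .conjTranspose_mul_self _ (injective_mulVec_smul_one_sub_permMatrix _ hs1 hs2)

/-- For the cycle graph `C_n` with `n > 2` even and every `s ∉ {−1, 1}`,
`Δ(s)` is positive definite. -/
theorem cycle_even_defLap_posDef (n : ℕ) (hn : 2 < n) (hev : Even n) (s : ℝ)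
    (hs1 : s ≠ 1) (hs2 : s ≠ -1) : (defLap (cycAdj n) s).PosDef :=
  cycle_even_defLap_posDef_general n hn s hs1 hs2
end

section
/- Let C_n be the cycle graph on n > 2 vertices with n even, let Q = Δ(−1) = D + A be its signless Laplacian, and let k ∈ ℝⁿ be the alternating vector k_i = (−1)^i for i ∈ {0,…,n−1}. Then for every initial vector x₀ ∈ ℝⁿ, exp(−tQ)·x₀ converges, as t → ∞, to (1/n)·(kᵀx₀)·k; in particular n/2 of the states converge to (1/n)kᵀx₀ and the other n/2 converge to −(1/n)kᵀx₀. -/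
open Matrix Filter

/-!
Diagonalising a positive semidefinite `A = U diag(μ) Uᵀ` orthogonally gives
`exp(−tA) = U diag(e^{−tμᵢ}) Uᵀ`, and `e^{−tμᵢ}` tends to `1` if `μᵢ = 0` and to `0` if `μᵢ > 0`;
so `exp(−tA)` tends to the orthogonal projection onto `ker A`. When `ker A` is the line spanned
by `k`, that projection sends `x` to `(k ⬝ᵥ x / k ⬝ᵥ k) • k`.

The signless Laplacian of `C_n` has quadratic form `∑ᵢ (xᵢ + xᵢ₊₁)²`, so it is positive
semidefinite and its kernel consists of the vectors with `xᵢ₊₁ = −xᵢ` all around the cycle.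
Going once around multiplies a coordinate by `(−1)ⁿ`, so for even `n` the kernel is exactly the
line spanned by the alternating vector `k`, and `k ⬝ᵥ k = n`.
-/

namespace Matrix.IsHermitian

variable {ι : Type*} [Fintype ι] [DecidableEq ι] {A : Matrix ι ι ℝ} (hA : A.IsHermitian)

local notation "U" => (hA.eigenvectorUnitary : Matrix ι ι ℝ)

lemma eq_eigenvectorUnitary_mul_diagonal_mul_star :
    A = U * diagonal hA.eigenvalues * star U := by
  conv_lhs => rw [hA.spectral_theorem]
  simp [RCLike.ofReal_real_eq_id]

lemma exp_smul_eq (t : ℝ) :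
    NormedSpace.exp (t • A) =
      U * diagonal (fun i => Real.exp (t * hA.eigenvalues i)) * star U := by
  have hinv : U⁻¹ = star U := Matrix.inv_eq_left_inv (Unitary.coe_star_mul_self _)
  have hconj : t • A = U * diagonal (t • hA.eigenvalues) * U⁻¹ := by
    conv_lhs => rw [hA.eq_eigenvectorUnitary_mul_diagonal_mul_star]
    rw [hinv, diagonal_smul, Matrix.mul_smul, Matrix.smul_mul]
  rw [hconj, Matrix.exp_conj _ _ Unitary.isUnit_coe, Matrix.exp_diagonal, hinv]
  congr
  ext i
  simp [Real.exp_eq_exp_ℝ]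

noncomputable def kerProj : Matrix ι ι ℝ :=
  U * diagonal (fun i => if hA.eigenvalues i = 0 then 1 else 0) * star U

lemma star_eigenvectorUnitary_mul : star U * A = diagonal hA.eigenvalues * star U :=
  calc star U * A = star U * (U * diagonal hA.eigenvalues * star U) :=
        congrArg _ hA.eq_eigenvectorUnitary_mul_diagonal_mul_star
    _ = diagonal hA.eigenvalues * star U := by
        rw [← Matrix.mul_assoc, ← Matrix.mul_assoc, Unitary.coe_star_mul_self, Matrix.one_mul]

lemma mul_eigenvectorUnitary : A * U = U * diagonal hA.eigenvalues :=
  calc A * U = U * diagonal hA.eigenvalues * star U * U :=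
        congrArg (· * U) hA.eq_eigenvectorUnitary_mul_diagonal_mul_star
    _ = U * diagonal hA.eigenvalues := by
        rw [Matrix.mul_assoc, Unitary.coe_star_mul_self, Matrix.mul_one]

lemma mul_kerProj : A * hA.kerProj = 0 := by
  have hdiag : diagonal hA.eigenvalues * diagonal (fun i => if hA.eigenvalues i = 0 then 1 else 0)
      = 0 := by
    rw [diagonal_mul_diagonal, ← diagonal_zero]
    congr 1
    ext i
    split_ifs with h <;> simp [h]
  rw [kerProj, ← Matrix.mul_assoc, ← Matrix.mul_assoc, hA.mul_eigenvectorUnitary,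
    Matrix.mul_assoc U, hdiag, Matrix.mul_zero, Matrix.zero_mul]

lemma kerProj_mulVec_of_mulVec_eq_zero {v : ι → ℝ} (hv : A *ᵥ v = 0) :
    hA.kerProj *ᵥ v = v := by
  have hw : diagonal hA.eigenvalues *ᵥ (star U *ᵥ v) = 0 := by
    rw [mulVec_mulVec, ← hA.star_eigenvectorUnitary_mul, ← mulVec_mulVec, hv, mulVec_zero]
  have hproj : diagonal (fun i => if hA.eigenvalues i = 0 then 1 else 0) *ᵥ (star U *ᵥ v) =
      star U *ᵥ v := by
    ext i
    have hwi := congrFun hw i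
    simp only [mulVec_diagonal, Pi.zero_apply, mul_eq_zero] at hwi ⊢
    split_ifs with h
    · exact one_mul _
    · rw [hwi.resolve_left h, mul_zero]
  rw [kerProj, ← mulVec_mulVec, ← mulVec_mulVec, hproj, mulVec_mulVec,
    Unitary.mul_star_self_of_mem hA.eigenvectorUnitary.2, one_mulVec]

lemma transpose_kerProj : hA.kerProjᵀ = hA.kerProj := by
  simp [kerProj, Matrix.transpose_mul, Matrix.star_eq_conjTranspose, Matrix.mul_assoc]

lemma kerProj_mulVec_of_ker_eq_span {k : ι → ℝ}
    (hker : LinearMap.ker (toLin' A) = Submodule.span ℝ {k}) (x : ι → ℝ) :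
    hA.kerProj *ᵥ x = (k ⬝ᵥ x / k ⬝ᵥ k) • k := by
  have mem_ker : ∀ v, A *ᵥ v = 0 ↔ ∃ c : ℝ, c • k = v := fun v => by
    rw [← toLin'_apply, ← LinearMap.mem_ker, hker, Submodule.mem_span_singleton]
  have hk : A *ᵥ k = 0 := (mem_ker k).mpr ⟨1, one_smul ℝ k⟩
  obtain ⟨c, hc⟩ := (mem_ker (hA.kerProj *ᵥ x)).mp
    (by rw [mulVec_mulVec, hA.mul_kerProj, zero_mulVec])
  have hdot : k ⬝ᵥ (hA.kerProj *ᵥ x) = k ⬝ᵥ x := by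
    rw [dotProduct_mulVec, ← hA.transpose_kerProj, vecMul_transpose,
      hA.kerProj_mulVec_of_mulVec_eq_zero hk]
  rw [← hc, dotProduct_smul, smul_eq_mul] at hdot
  rw [← hc, ← hdot]
  rcases eq_or_ne k 0 with rfl | hk0
  · simp
  · rw [mul_div_cancel_right₀ _ (dotProduct_self_eq_zero.not.mpr hk0)]

end Matrix.IsHermitian

lemma Real.tendsto_exp_neg_mul_atTop {c : ℝ} (hc : 0 ≤ c) :
    Tendsto (fun t => Real.exp (-t * c)) atTop (nhds (if c = 0 then 1 else 0)) := by
  rcases hc.eq_or_lt with rfl | hpos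
  · simp
  · rw [if_neg hpos.ne']
    exact Real.tendsto_exp_atBot.comp
      ((tendsto_mul_const_atBot_of_pos hpos).mpr tendsto_neg_atTop_atBot)

lemma Matrix.PosSemidef.tendsto_exp_neg_smul {ι : Type*} [Fintype ι] [DecidableEq ι]
    {A : Matrix ι ι ℝ} (hA : A.PosSemidef) :
    Tendsto (fun t : ℝ => NormedSpace.exp ((-t) • A)) atTop (nhds hA.isHermitian.kerProj) := by
  set U := (hA.isHermitian.eigenvectorUnitary : Matrix ι ι ℝ)
  have hcont : Continuous fun d : ι → ℝ => U * diagonal d * star U := by fun_prop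
  simp only [hA.isHermitian.exp_smul_eq]
  exact (hcont.tendsto _).comp
    (tendsto_pi_nhds.mpr fun i => Real.tendsto_exp_neg_mul_atTop (hA.eigenvalues_nonneg i))

theorem Matrix.PosSemidef.tendsto_exp_neg_smul_mulVec_of_ker_eq_span {ι : Type*} [Fintype ι]
    [DecidableEq ι] {A : Matrix ι ι ℝ} (hA : A.PosSemidef) {k : ι → ℝ}
    (hker : LinearMap.ker (toLin' A) = Submodule.span ℝ {k}) (x : ι → ℝ) :
    Tendsto (fun t : ℝ => NormedSpace.exp ((-t) • A) *ᵥ x) atTop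
      (nhds ((k ⬝ᵥ x / k ⬝ᵥ k) • k)) := by
  rw [← hA.isHermitian.kerProj_mulVec_of_ker_eq_span hker]
  exact ((continuous_id.matrix_mulVec continuous_const).tendsto _).comp hA.tendsto_exp_neg_smul

lemma defLap_neg_one {V : Type} [Fintype V] [DecidableEq V] (A : Matrix V V ℝ) :
    defLap A (-1) = degMat A + A := by
  simp only [defLap, neg_one_sq, one_smul, neg_one_smul, sub_neg_eq_add]
  abel

lemma isHermitian_defLap {V : Type} [Fintype V] [DecidableEq V] {A : Matrix V V ℝ}
    (hA : A.IsHermitian) (s : ℝ) : (defLap A s).IsHermitian :=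
  (((isHermitian_diagonal _).sub isHermitian_one).smul (IsSelfAdjoint.all _)).sub
    (hA.smul (IsSelfAdjoint.all _)) |>.add isHermitian_one

lemma isHermitian_cycAdj (n : ℕ) : (cycAdj n).IsHermitian := by
  ext i j
  simp only [conjTranspose_apply, star_trivial, cycAdj, or_comm]

lemma alternating_dotProduct_self (n : ℕ) :
    (fun i : Fin n => (-1 : ℝ) ^ (i : ℕ)) ⬝ᵥ (fun i : Fin n => (-1 : ℝ) ^ (i : ℕ)) =
      n := by
  simp [dotProduct, ← mul_pow]

section Cycle

variable {n : ℕ} [NeZero n]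

lemma Fin.val_add_one_eq_add_one_mod (i : Fin n) :
    ((i + 1 : Fin n) : ℕ) = ((i : ℕ) + 1) % n := by
  rw [Fin.val_add, Fin.val_one', Nat.add_mod_mod]

lemma Fin.add_one_ne_sub_one (hn : 2 < n) (i : Fin n) : i + 1 ≠ i - 1 := by
  intro h
  have h2 : (1 : Fin n) + 1 = 0 := by rw [← sub_eq_zero.mpr h]; abel
  have := congrArg Fin.val h2
  simp [Fin.val_add, Nat.mod_eq_of_lt (by omega : 1 < n), Nat.mod_eq_of_lt hn] at this

lemma cycAdj_apply (i j : Fin n) :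
    cycAdj n i j = if j = i + 1 ∨ j = i - 1 then 1 else 0 := by
  simp only [cycAdj, Fin.ext_iff, Fin.val_add_one_eq_add_one_mod, eq_sub_iff_add_eq, eq_comm]

lemma cycAdj_mulVec (hn : 2 < n) (x : Fin n → ℝ) (i : Fin n) :
    (cycAdj n *ᵥ x) i = x (i + 1) + x (i - 1) := by
  have hmem : ∀ j, (j = i + 1 ∨ j = i - 1) ↔ j ∈ ({i + 1, i - 1} : Finset (Fin n)) := by
    simp
  simp only [mulVec, dotProduct, cycAdj_apply, hmem, ite_mul, one_mul, zero_mul,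
    Finset.sum_ite_mem, Finset.univ_inter, Finset.sum_pair (Fin.add_one_ne_sub_one hn i)]

lemma defLap_neg_one_cycAdj_mulVec (hn : 2 < n) (x : Fin n → ℝ) (i : Fin n) :
    (defLap (cycAdj n) (-1) *ᵥ x) i = 2 * x i + x (i + 1) + x (i - 1) := by
  have hdeg : ∑ j, cycAdj n i j = 2 := by
    simpa [mulVec, dotProduct, one_add_one_eq_two] using cycAdj_mulVec hn 1 i
  rw [defLap_neg_one, add_mulVec, Pi.add_apply, degMat, mulVec_diagonal, hdeg, cycAdj_mulVec hn,
    add_assoc]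

lemma dotProduct_defLap_neg_one_cycAdj_mulVec (hn : 2 < n) (x : Fin n → ℝ) :
    x ⬝ᵥ (defLap (cycAdj n) (-1) *ᵥ x) = ∑ i, (x i + x (i + 1)) ^ 2 := by
  have shift : ∀ f : Fin n → ℝ, ∑ i, f (i + 1) = ∑ i, f i :=
    Equiv.sum_comp (Equiv.addRight (1 : Fin n))
  have hsq : ∑ i, x (i + 1) ^ 2 = ∑ i, x i ^ 2 := shift (x · ^ 2)
  have hprev : ∑ i, x i * x (i - 1) = ∑ i, x i * x (i + 1) := by
    rw [← shift]
    simp only [add_sub_cancel_right, mul_comm]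
  simp only [dotProduct, defLap_neg_one_cycAdj_mulVec hn, add_sq, mul_add, Finset.sum_add_distrib,
    hsq, hprev]
  simp only [← Finset.sum_add_distrib]
  exact Finset.sum_congr rfl fun i _ => by ring

lemma posSemidef_defLap_neg_one_cycAdj (hn : 2 < n) : (defLap (cycAdj n) (-1)).PosSemidef :=
  .of_dotProduct_mulVec_nonneg (isHermitian_defLap (isHermitian_cycAdj n) _) fun x => by
    rw [star_trivial, dotProduct_defLap_neg_one_cycAdj_mulVec hn]
    exact Finset.sum_nonneg fun i _ => sq_nonneg _

lemma defLap_neg_one_cycAdj_mulVec_eq_zero_iff (hn : 2 < n) {x : Fin n → ℝ} :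
    defLap (cycAdj n) (-1) *ᵥ x = 0 ↔ ∀ i, x (i + 1) = -x i := by
  constructor
  · intro h i
    have hsum : ∑ i, (x i + x (i + 1)) ^ 2 = 0 := by
      rw [← dotProduct_defLap_neg_one_cycAdj_mulVec hn, h, dotProduct_zero]
    have hi := (Finset.sum_eq_zero_iff_of_nonneg fun i _ => sq_nonneg (x i + x (i + 1))).mp hsum i
      (Finset.mem_univ i)
    linarith [pow_eq_zero_iff two_ne_zero |>.mp hi]
  · intro h
    ext i
    have hprev := h (i - 1)
    rw [sub_add_cancel] at hprev
    rw [defLap_neg_one_cycAdj_mulVec hn, h, Pi.zero_apply]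
    linarith

lemma eq_smul_alternating_of_forall_add_one {x : Fin n → ℝ} (h : ∀ i, x (i + 1) = -x i) :
    x = x 0 • fun i : Fin n => (-1 : ℝ) ^ (i : ℕ) := by
  obtain ⟨m, rfl⟩ := Nat.exists_eq_succ_of_ne_zero (NeZero.ne n)
  ext i
  induction i using Fin.induction with
  | zero => simp
  | succ i ih =>
    rw [← Fin.coeSucc_eq_succ, h, ih]
    simp [pow_succ]

lemma alternating_add_one (hev : Even n) (i : Fin n) :
    (-1 : ℝ) ^ ((i + 1 : Fin n) : ℕ) = -(-1) ^ (i : ℕ) := by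
  rw [Fin.val_add_one_eq_add_one_mod, neg_one_pow_eq_pow_mod_two,
    Nat.mod_mod_of_dvd _ hev.two_dvd, ← neg_one_pow_eq_pow_mod_two, pow_succ, mul_neg_one]

lemma ker_defLap_neg_one_cycAdj (hn : 2 < n) (hev : Even n) :
    LinearMap.ker (toLin' (defLap (cycAdj n) (-1))) =
      Submodule.span ℝ {fun i : Fin n => (-1 : ℝ) ^ (i : ℕ)} := by
  ext x
  rw [LinearMap.mem_ker, toLin'_apply, Submodule.mem_span_singleton,
    defLap_neg_one_cycAdj_mulVec_eq_zero_iff hn]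
  constructor
  · exact fun h => ⟨x 0, (eq_smul_alternating_of_forall_add_one h).symm⟩
  · rintro ⟨c, rfl⟩ i
    simp [alternating_add_one hev]

end Cycle

/-- For the cycle graph `C_n` with `n > 2` even, with `Q = Δ(−1) = D + A` the signless
Laplacian and `k` the alternating vector `kᵢ = (−1)^i`, the solution `exp(−tQ) x₀`
converges as `t → ∞` to `(1/n)(kᵀx₀) k`. -/
theorem cycle_even_signless_laplacian_limit (n : ℕ) (hn : 2 < n) (hev : Even n)
    (x₀ : Fin n → ℝ) :
    Tendsto (fun t : ℝ => NormedSpace.exp ((-t) • defLap (cycAdj n) (-1)) *ᵥ x₀) atTop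
      (nhds ((1 / (n : ℝ) * ((fun i : Fin n => (-1 : ℝ) ^ (i : ℕ)) ⬝ᵥ x₀)) •
        fun i : Fin n => (-1 : ℝ) ^ (i : ℕ))) := by
  have : NeZero n := ⟨by omega⟩
  simpa only [alternating_dotProduct_self, one_div_mul_eq_div] using
    (posSemidef_defLap_neg_one_cycAdj hn).tendsto_exp_neg_smul_mulVec_of_ker_eq_span
      (ker_defLap_neg_one_cycAdj hn hev) x₀
end
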